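/- Fix μ ∈ (0,1) and real numbers c, g with c < 0 and gc > 1. Then there is no point (ξ, η, p_ξ, p_η) ∈ ℝ⁴ with ξ ≥ 1 and ξ² ≠ η² satisfying H(ξ, η, p_ξ, p_η) = c and G(ξ, η, p_ξ, p_η) = g, where H = (2(ξ²−1)p_ξ² − 2ξ + 2(1−η²)p_η² + 2(1−2μ)η)/(ξ²−η²) and G = −(η²(2(ξ²−1)p_ξ² − 2ξ) + ξ²(2(1−η²)p_η² + 2(1−2μ)η))/(ξ²−η²). In other words, the region of the (g,c)-plane below the curve gc = 1 is not classically accessible. -/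
import Mathlib


/-- The Hamiltonian of the Euler problem in elliptic coordinates. -/
noncomputable def eulerH (μ ξ η pξ pη : ℝ) : ℝ :=
  (2 * (ξ ^ 2 - 1) * pξ ^ 2 - 2 * ξ + (2 * (1 - η ^ 2) * pη ^ 2 + 2 * (1 - 2 * μ) * η)) /
    (ξ ^ 2 - η ^ 2)

/-- The Strand–Reinhardt first integral of the Euler problem. -/
noncomputable def eulerG (μ ξ η pξ pη : ℝ) : ℝ :=
  -(η ^ 2 * (2 * (ξ ^ 2 - 1) * pξ ^ 2 - 2 * ξ) +
      ξ ^ 2 * (2 * (1 - η ^ 2) * pη ^ 2 + 2 * (1 - 2 * μ) * η)) /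
    (ξ ^ 2 - η ^ 2)

/-- For μ ∈ (0,1), c < 0 and gc > 1, there is no point (ξ, η, p_ξ, p_η) with ξ ≥ 1
and ξ² ≠ η² satisfying H = c and G = g: the region below the curve gc = 1 is not
classically accessible. -/
theorem euler_region_below_gc_one_inaccessible (μ c g : ℝ) (hμ0 : 0 < μ) (hμ1 : μ < 1)
    (hc : c < 0) (hgc : 1 < g * c) :
    ¬ ∃ ξ η pξ pη : ℝ, 1 ≤ ξ ∧ ξ ^ 2 ≠ η ^ 2 ∧
      eulerH μ ξ η pξ pη = c ∧ eulerG μ ξ η pξ pη = g := by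
  rintro ⟨ξ, η, pξ, pη, hξ, hne, hH, hG⟩
  have hD : ξ ^ 2 - η ^ 2 ≠ 0 := sub_ne_zero.mpr hne
  rw [eulerH, div_eq_iff hD] at hH
  rw [eulerG, div_eq_iff hD] at hG
  -- Derive H_ξ = c ξ² + g
  have key : (ξ ^ 2 - η ^ 2) * (2 * (ξ ^ 2 - 1) * pξ ^ 2 - 2 * ξ) =
      (ξ ^ 2 - η ^ 2) * (c * ξ ^ 2 + g) := by ring_nf; nlinarith [hH, hG]
  have hXi : 2 * (ξ ^ 2 - 1) * pξ ^ 2 - 2 * ξ = c * ξ ^ 2 + g :=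
    mul_left_cancel₀ hD key
  -- H_ξ ≥ -2ξ, so c ξ² + 2ξ + g ≥ 0
  have h1 : (0:ℝ) ≤ 2 * (ξ ^ 2 - 1) := by nlinarith
  have hA : 0 ≤ c * ξ ^ 2 + 2 * ξ + g := by
    nlinarith [mul_nonneg h1 (sq_nonneg pξ)]
  nlinarith [sq_nonneg (c * ξ + 1), mul_nonneg hA (neg_nonneg.mpr hc.le)]
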